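/- Let G be a finite connected simple graph with h_G ≥ 2, let e₁ be an edge of G, and let q be a prime power. Then q divides the number of points β ∈ F_q^{E∖{e₁}} with (∂φ_G/∂x_{e₁})(β) = 0 and (φ_G|_{x_{e₁}=0})(β) = 0 (both polynomials do not involve x_{e₁}). -/

import Mathlib

open MvPolynomial

variable {V : Type}

/-- `T ⊆ E(G)` is a spanning tree of `G`: a set of `n_G = |V| - 1` edges such that the
subgraph `(V, T)` is connected. -/
def SimpleGraph.IsSpanningTree [Fintype V] (G : SimpleGraph V) (T : Finset G.edgeSet) : Prop :=
  T.card = Fintype.card V - 1 ∧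
    (SimpleGraph.fromEdgeSet (Subtype.val '' (T : Set G.edgeSet))).Connected

-- The dual graph polynomial `φ_G = Σ_T Π_{e ∈ T} x_e`, summed over all spanning trees.
open scoped Classical in
noncomputable def dualPoly [Fintype V] (R : Type) [CommRing R] (G : SimpleGraph V)
    [Fintype G.edgeSet] : MvPolynomial G.edgeSet R :=
  ∑ T ∈ Finset.univ.filter (fun T : Finset G.edgeSet => G.IsSpanningTree T), ∏ e ∈ T, X e

-- `setZero k p` is the polynomial `p` with the variable `x_k` set to `0`.
open scoped Classical in
noncomputable def setZero {σ R : Type*} [CommRing R] (k : σ) (p : MvPolynomial σ R) :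
    MvPolynomial σ R :=
  aeval (fun i => if i = k then 0 else X i) p

/-!
By the weighted matrix-tree theorem, `φ_G(γ) = det (N · diag γ · Nᵀ)` where `N` is the signed
incidence matrix of `G` with the row of a vertex `v₀` removed. For `α` with `α e₁ = 0` write
`L = N · diag α · Nᵀ` and `u` for the column of `e₁`; then `φ_G|_{x_{e₁}=0}(α) = det L` and
`(∂φ_G/∂x_{e₁} + φ_G|_{x_{e₁}=0})(α) = det (L + u uᵀ)`. Since `L` is symmetric, both determinants
vanish iff some `v ≠ 0` has `L v = 0` and `u ⬝ᵥ v = 0`.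

Count the pairs `(α, v)`. For fixed `α` the admissible `v` are the nonzero vectors of a subspace,
so there are `q ^ k - 1 ≡ -1` of them as soon as there is one. For fixed `v` they are the kernel
of `α ↦ (α e₁, L_α v)`, a linear map from `F^E` to a space of dimension `|V| < |E|`, hence a
positive power of `q` many. So the number of points is `≡ -#pairs ≡ 0 (mod q)`.
-/

open Finset Matrix SimpleGraph

theorem sum_filter_injective_image_eq_sum_perm {ι E M : Type*} [Fintype ι] [DecidableEq ι]
    [Fintype E] [DecidableEq E] [AddCommMonoid M] (S : Finset E) (σ : ι ≃ S) (g : (ι → E) → M) :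
    ∑ p ∈ univ.filter (fun p : ι → E => Function.Injective p ∧ univ.image p = S), g p =
      ∑ π : Equiv.Perm ι, g (fun i => σ (π i)) := by
  have hmem (p : ι → E) (hp : univ.image p = S) (i : ι) : p i ∈ S :=
    hp ▸ mem_image_of_mem p (mem_univ i)
  refine (sum_bij' (fun π _ i => (σ (π i) : E))
    (fun p hp => Equiv.ofBijective (fun i => σ.symm ⟨p i, hmem p (mem_filter.mp hp).2.2 i⟩) ?_)
    (fun π _ => ?_) (fun _ _ => mem_univ _) (fun π _ => ?_) (fun p hp => ?_)
    (fun _ _ => rfl)).symm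
  · refine Finite.injective_iff_bijective.mp fun i j hij => (mem_filter.mp hp).2.1 ?_
    simpa using hij
  · have hinj : Function.Injective fun i => (σ (π i) : E) :=
      Subtype.val_injective.comp (σ.injective.comp π.injective)
    refine mem_filter.mpr ⟨mem_univ _, hinj, eq_of_subset_of_card_le ?_ ?_⟩
    · simp [subset_iff]
    · rw [card_image_of_injective _ hinj, card_univ, ← Fintype.card_coe S, Fintype.card_congr σ]
  · ext i
    simp
  · funext i
    simp

namespace Matrix

section CauchyBinet

variable {R : Type*} [CommRing R] {ι E : Type*} [Fintype ι] [DecidableEq ι] [Fintype E]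

theorem det_mul_eq_sum_prod_mul_det_submatrix (A : Matrix ι E R) (B : Matrix E ι R) :
    (A * B).det = ∑ p : ι → E, (∏ i, B (p i) i) * (A.submatrix id p).det := by
  simp only [det_apply', mul_apply, prod_univ_sum, Finset.mul_sum, Fintype.piFinset_univ,
    submatrix_apply, id]
  rw [Finset.sum_comm]
  refine sum_congr rfl fun p _ => sum_congr rfl fun σ _ => ?_
  rw [prod_mul_distrib]
  ring

variable [DecidableEq E]

/-- Cauchy–Binet. The summand of `S` is pinned down through an arbitrary enumeration `σ` of `S`,
on which the product of the two minors does not depend. -/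
theorem det_mul_eq_sum_powersetCard (A : Matrix ι E R) (B : Matrix E ι R) (f : Finset E → R)
    (hf : ∀ (S : Finset E) (σ : ι ≃ S),
      (A.submatrix id fun i => (σ i : E)).det * (B.submatrix (fun i => (σ i : E)) id).det = f S) :
    (A * B).det = ∑ S ∈ univ.powersetCard (Fintype.card ι), f S := by
  have hnoninj : ∑ p ∈ univ.filter (fun p : ι → E => ¬ Function.Injective p),
      (∏ i, B (p i) i) * (A.submatrix id p).det = 0 := by
    refine sum_eq_zero fun p hp => ?_
    obtain ⟨i, j, hij, hne⟩ := Function.not_injective_iff.mp (mem_filter.mp hp).2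
    rw [det_zero_of_column_eq hne fun k => by simp [hij], mul_zero]
  rw [det_mul_eq_sum_prod_mul_det_submatrix,
    ← sum_filter_add_sum_filter_not univ Function.Injective, hnoninj, add_zero,
    ← sum_fiberwise_of_maps_to (g := fun p => univ.image p)
      (t := univ.powersetCard (Fintype.card ι)) fun p hp => ?_]
  · refine sum_congr rfl fun S hS => ?_
    have σ : ι ≃ S := Fintype.equivOfCardEq (by simpa using (mem_powersetCard.mp hS).2.symm)
    rw [filter_filter, sum_filter_injective_image_eq_sum_perm S σ, ← hf S σ,
      det_apply' (B.submatrix _ _), mul_comm, sum_mul]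
    refine sum_congr rfl fun π _ => ?_
    rw [show (A.submatrix id fun i => (σ (π i) : E)) =
      (A.submatrix id fun i => (σ i : E)).submatrix id π from rfl, det_permute']
    simp only [submatrix_apply, id]
    ring
  · rw [mem_powersetCard, card_image_of_injective _ (mem_filter.mp hp).2]
    exact ⟨subset_univ _, card_univ⟩

end CauchyBinet

section WeightedLaplacian

variable {F : Type*} [Field F] {ι E : Type*} [Fintype ι] [Fintype E] [DecidableEq E]

omit [Fintype ι] in
theorem mul_diagonal_mul_transpose_apply (N : Matrix ι E F) (α : E → F) (i j : ι) :
    (N * diagonal α * Nᵀ) i j = ∑ e, α e * N i e * N j e := by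
  simp only [mul_apply, diagonal_apply, transpose_apply, mul_ite, mul_zero, sum_ite_eq',
    mem_univ, if_true]
  exact sum_congr rfl fun _ _ => by ring

omit [Fintype ι] in
theorem isSymm_mul_diagonal_mul_transpose (N : Matrix ι E F) (α : E → F) :
    (N * diagonal α * Nᵀ).IsSymm := by
  simp [IsSymm, transpose_mul, Matrix.mul_assoc]

omit [Fintype ι] in
theorem mul_diagonal_update_mul_transpose (N : Matrix ι E F) {α : E → F} {e : E}
    (he : α e = 0) :
    N * diagonal (Function.update α e 1) * Nᵀ =
      N * diagonal α * Nᵀ + vecMulVec (fun i => N i e) (fun i => N i e) := by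
  have hdiag : diagonal (Function.update α e 1) = diagonal α + diagonal (Pi.single e 1) := by
    rw [diagonal_add]
    congr 1
    ext k
    rcases eq_or_ne k e with rfl | hk <;> simp [*]
  ext i j
  rw [hdiag, Matrix.mul_add, Matrix.add_mul, Matrix.add_apply,
    mul_diagonal_mul_transpose_apply N (Pi.single e 1)]
  simp [Pi.single_apply, vecMulVec_apply]

theorem mulVec_mul_diagonal_mul_transpose (N : Matrix ι E F) (α : E → F) (v : ι → F) :
    (N * diagonal α * Nᵀ) *ᵥ v = (N * diagonal (Nᵀ *ᵥ v)) *ᵥ α := by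
  simp only [← mulVec_mulVec]
  congr 1
  ext e
  simp [mulVec_diagonal, mul_comm]

end WeightedLaplacian

theorem det_eq_zero_and_det_add_vecMulVec_eq_zero_iff {F ι : Type*} [Field F] [Fintype ι]
    [DecidableEq ι] {M : Matrix ι ι F} (hM : M.IsSymm) (u : ι → F) :
    (M.det = 0 ∧ (M + vecMulVec u u).det = 0) ↔ ∃ v ≠ 0, u ⬝ᵥ v = 0 ∧ M *ᵥ v = 0 := by
  have hrank1 (v : ι → F) : vecMulVec u u *ᵥ v = (u ⬝ᵥ v) • u := by
    rw [vecMulVec_mulVec, op_smul_eq_smul]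
  constructor
  · rintro ⟨h0, h1⟩
    obtain ⟨w, hw0, hw⟩ := exists_mulVec_eq_zero_iff.mpr h0
    by_cases huw : u ⬝ᵥ w = 0
    · exact ⟨w, hw0, huw, hw⟩
    obtain ⟨z, hz0, hz⟩ := exists_mulVec_eq_zero_iff.mpr h1
    rw [add_mulVec, hrank1] at hz
    by_cases huz : u ⬝ᵥ z = 0
    · exact ⟨z, hz0, huz, by simpa [huz] using hz⟩
    -- Otherwise `u` lies in the range of `M`, which is orthogonal to `ker M` as `M` is symmetric.
    refine absurd ?_ huw
    have hu : u = M *ᵥ (-(u ⬝ᵥ z)⁻¹ • z) := by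
      rw [mulVec_smul, eq_neg_of_add_eq_zero_left hz, smul_neg, neg_smul, neg_neg, smul_smul,
        inv_mul_cancel₀ huz, one_smul]
    rw [dotProduct_comm, hu, dotProduct_mulVec, ← mulVec_transpose, hM, hw, zero_dotProduct]
  · rintro ⟨v, hv0, huv, hMv⟩
    refine ⟨exists_mulVec_eq_zero_iff.mp ⟨v, hv0, hMv⟩, exists_mulVec_eq_zero_iff.mp ⟨v, hv0, ?_⟩⟩
    rw [add_mulVec, hMv, hrank1, huv, zero_smul, add_zero]

end Matrix

theorem dvd_card_filter_exists {X Y : Type*} [Fintype X] [Fintype Y] (R : X → Y → Prop)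
    [∀ x, DecidablePred (R x)] (q : ℕ) (hX : ∀ x, (∃ y, R x y) → q ∣ #{y | R x y} + 1)
    (hY : ∀ y, q ∣ #{x | R x y}) : q ∣ #{x | ∃ y, R x y} := by
  have hsum : q ∣ ∑ x, #{y | R x y} := by
    simp only [card_filter]
    rw [sum_comm]
    exact dvd_sum fun y _ => card_filter (R · y) _ ▸ hY y
  have htotal : q ∣ ∑ x, (#{y | R x y} + if ∃ y, R x y then 1 else 0) := by
    refine dvd_sum fun x _ => ?_
    split_ifs with hx
    · exact hX x hx
    · simp [not_exists.mp hx]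
  rwa [sum_add_distrib, ← card_filter, Nat.dvd_add_right hsum] at htotal

section FiniteField

variable {F : Type*} [Field F] [Fintype F]

theorem card_dvd_natCard_of_ne_bot {M : Type*} [AddCommGroup M] [Module F M]
    [Module.Finite F M] {K : Submodule F M} (hK : K ≠ ⊥) : Fintype.card F ∣ Nat.card K := by
  rw [Module.natCard_eq_pow_finrank (K := F), Nat.card_eq_fintype_card]
  exact dvd_pow_self _ (Submodule.finrank_eq_zero.not.mpr hK)

variable {M : Type*} [AddCommGroup M] [Module F M] [Fintype M]

theorem card_dvd_card_filter_ne_zero_add_one [DecidableEq M] (K : Submodule F M)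
    [DecidablePred (· ∈ K)] (hK : ∃ v ∈ K, v ≠ 0) :
    Fintype.card F ∣ #{v | v ∈ K ∧ v ≠ 0} + 1 := by
  have hcard : #{v | v ∈ K ∧ v ≠ 0} + 1 = Nat.card K := by
    rw [show ({v | v ∈ K ∧ v ≠ 0} : Finset M) = ({v | v ∈ K} : Finset M).erase 0 by
      ext; simp [and_comm], card_erase_add_one (by simp), Nat.card_eq_fintype_card,
      Fintype.card_subtype]
  exact hcard ▸ card_dvd_natCard_of_ne_bot ((Submodule.ne_bot_iff K).mpr hK)

theorem card_dvd_card_filter_apply_eq_zero {N : Type*} [AddCommGroup N] [Module F N]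
    [Module.Finite F N] [DecidableEq N] (f : M →ₗ[F] N)
    (h : Module.finrank F N < Module.finrank F M) : Fintype.card F ∣ #{x | f x = 0} := by
  have hcard : Nat.card (LinearMap.ker f) = #{x | f x = 0} := by
    rw [← Fintype.card_subtype, ← Nat.card_eq_fintype_card]
    rfl
  exact hcard ▸ card_dvd_natCard_of_ne_bot (LinearMap.ker_ne_bot_of_finrank_lt h)

variable {ι E : Type*} [Fintype ι] [DecidableEq ι] [Fintype E] [DecidableEq E] [DecidableEq F]

theorem card_dvd_card_filter_exists_ker (N : Matrix ι E F) (e : E)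
    (h : Fintype.card ι + 1 < Fintype.card E) :
    Fintype.card F ∣ #{α : E → F | α e = 0 ∧
      ∃ v ≠ 0, (fun i => N i e) ⬝ᵥ v = 0 ∧ (N * diagonal α * Nᵀ) *ᵥ v = 0} := by
  set u : ι → F := fun i => N i e
  have key := dvd_card_filter_exists
    (fun (α : E → F) (v : ι → F) => α e = 0 ∧ v ≠ 0 ∧ u ⬝ᵥ v = 0 ∧ (N * diagonal α * Nᵀ) *ᵥ v = 0)
    (Fintype.card F) ?_ ?_
  · simpa only [exists_and_left] using key
  · classical
    rintro α ⟨v, hαe, hv⟩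
    let K := LinearMap.ker (dotProductEquiv F ι u) ⊓ LinearMap.ker (N * diagonal α * Nᵀ).mulVecLin
    have hmem (w : ι → F) : w ∈ K ↔ u ⬝ᵥ w = 0 ∧ (N * diagonal α * Nᵀ) *ᵥ w = 0 := by
      simp only [K, Submodule.mem_inf, LinearMap.mem_ker, dotProductEquiv_apply_apply,
        mulVecLin_apply]
    have hK := card_dvd_card_filter_ne_zero_add_one K ⟨v, (hmem v).mpr hv.2, hv.1⟩
    convert hK using 3
    ext w
    simp only [mem_filter, mem_univ, true_and, hmem]
    tauto
  · intro v
    by_cases hv : v ≠ 0 ∧ u ⬝ᵥ v = 0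
    · let f := (LinearMap.proj e : (E → F) →ₗ[F] F).prod (N * diagonal (Nᵀ *ᵥ v)).mulVecLin
      have hf := card_dvd_card_filter_apply_eq_zero f (by
        simp only [Module.finrank_prod, Module.finrank_self, Module.finrank_fintype_fun_eq_card]
        omega)
      convert hf using 2
      ext α
      simp [f, hv, mulVec_mul_diagonal_mul_transpose]
    · rw [filter_false_of_mem fun α _ hα => hv ⟨hα.2.1, hα.2.2.1⟩, card_empty]
      exact dvd_zero _

theorem card_dvd_card_filter_det_eq_zero (N : Matrix ι E F) (e : E)
    (h : Fintype.card ι + 1 < Fintype.card E) :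
    Fintype.card F ∣ #{α : E → F | α e = 0 ∧ (N * diagonal α * Nᵀ).det = 0 ∧
      (N * diagonal (Function.update α e 1) * Nᵀ).det = 0} := by
  convert card_dvd_card_filter_exists_ker N e h using 2
  ext α
  simp only [mem_filter, mem_univ, true_and]
  refine and_congr_right fun hα => ?_
  rw [mul_diagonal_update_mul_transpose N hα]
  exact det_eq_zero_and_det_add_vecMulVec_eq_zero_iff (isSymm_mul_diagonal_mul_transpose N α) _

end FiniteField

section Polynomial

variable {σ R : Type*} [CommRing R] [DecidableEq σ]

theorem eval_setZero (k : σ) (p : MvPolynomial σ R) (α : σ → R) :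
    eval α (setZero k p) = eval (Function.update α k 0) p := by
  induction p using MvPolynomial.induction_on with
  | C a => simp [setZero]
  | add p q hp hq => simp_all [setZero]
  | mul_X p i h =>
    simp only [setZero, map_mul, aeval_X] at h ⊢
    rw [h]
    by_cases hi : i = k <;> simp [hi]

theorem pderiv_prod_X_of_notMem {k : σ} {T : Finset σ} (hk : k ∉ T) :
    pderiv k (∏ e ∈ T, (X e : MvPolynomial σ R)) = 0 := by
  induction T using Finset.induction_on with
  | empty => simp
  | insert a T ha ih =>
    rw [prod_insert ha, pderiv_mul, ih fun h => hk (mem_insert_of_mem h),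
      pderiv_X_of_ne fun h : a = k => hk (h ▸ mem_insert_self a T)]
    simp

theorem eval_update_prod_X_of_notMem {k : σ} {T : Finset σ} (hk : k ∉ T) (α : σ → R) (t : R) :
    eval (Function.update α k t) (∏ e ∈ T, X e) = eval α (∏ e ∈ T, X e) := by
  simp only [map_prod, eval_X]
  exact prod_congr rfl fun e he => Function.update_of_ne (ne_of_mem_of_not_mem he hk) _ _

theorem eval_update_prod_X (k : σ) (T : Finset σ) (α : σ → R) (t : R) :
    eval (Function.update α k t) (∏ e ∈ T, X e) =
      t * eval α (pderiv k (∏ e ∈ T, X e)) + eval α (setZero k (∏ e ∈ T, X e)) := by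
  rw [eval_setZero]
  by_cases hk : k ∈ T
  · have hk' : k ∉ T.erase k := notMem_erase k T
    rw [← mul_prod_erase T X hk, pderiv_mul, pderiv_prod_X_of_notMem hk', pderiv_X_self]
    simp [eval_update_prod_X_of_notMem hk']
  · rw [pderiv_prod_X_of_notMem hk, eval_update_prod_X_of_notMem hk,
      eval_update_prod_X_of_notMem hk]
    simp

end Polynomial

section Incidence

variable (F : Type*) [Field F] [DecidableEq V]

-- Oriented by the arbitrary representative `e.out`; only squares of its minors are used.
noncomputable def signedIncidence (e : Sym2 V) : V → F :=
  Pi.single e.out.1 1 - Pi.single e.out.2 1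

variable {F}

omit [DecidableEq V] in
theorem Sym2.mem_iff_eq_out {e : Sym2 V} {v : V} : v ∈ e ↔ v = e.out.1 ∨ v = e.out.2 := by
  conv_lhs => rw [← Quot.out_eq e]
  exact Sym2.mem_iff

theorem signedIncidence_apply_of_notMem {e : Sym2 V} {v : V} (hv : v ∉ e) :
    signedIncidence F e v = 0 := by
  rw [Sym2.mem_iff_eq_out, not_or] at hv
  simp [signedIncidence, hv.1, hv.2]

theorem signedIncidence_apply_sq_of_mem {e : Sym2 V} (he : ¬e.IsDiag) {v : V} (hv : v ∈ e) :
    signedIncidence F e v ^ 2 = 1 := by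
  have hne : e.out.1 ≠ e.out.2 := by rwa [← Quot.out_eq e, Sym2.mk_isDiag_iff] at he
  rcases Sym2.mem_iff_eq_out.mp hv with h | h <;> simp [signedIncidence, h, hne, hne.symm]

theorem sum_mul_signedIncidence [Fintype V] (f : V → F) (e : Sym2 V) :
    ∑ v, f v * signedIncidence F e v = f e.out.1 - f e.out.2 := by
  simp [signedIncidence, mul_sub, sum_sub_distrib, Pi.single_apply]

theorem sum_subtype_ne_mul_signedIncidence [Fintype V] {v₀ : V} {f : V → F} (hf : f v₀ = 0)
    (e : Sym2 V) :
    ∑ v : {v // v ≠ v₀}, f v * signedIncidence F e v = f e.out.1 - f e.out.2 := by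
  rw [← sum_mul_signedIncidence, Fintype.sum_eq_add_sum_subtype_ne _ v₀, hf, zero_mul, zero_add]

end Incidence

theorem SimpleGraph.Connected.exists_adj_dist_lt {H : SimpleGraph V} (hH : H.Connected)
    {v₀ v : V} (hv : v ≠ v₀) : ∃ w, H.Adj w v ∧ H.dist v₀ w < H.dist v₀ v := by
  obtain ⟨p, hp⟩ := hH.exists_walk_length_eq_dist v v₀
  cases p with
  | nil => exact absurd rfl hv
  | cons hadj q =>
    refine ⟨_, hadj.symm, ?_⟩
    rw [dist_comm, dist_comm (u := v₀), ← hp, Walk.length_cons]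
    exact Nat.lt_succ_of_le (dist_le q)

section Determinants

variable {F : Type*} [Field F] [Fintype V] [DecidableEq V] {v₀ : V}

theorem det_signedIncidence_parent_sq (p : {v // v ≠ v₀} → V) (d : V → ℕ)
    (hp : ∀ i, d (p i) < d i) :
    (of fun i j : {v // v ≠ v₀} => signedIncidence F s(p j, j) i).det ^ 2 = 1 := by
  -- The matrix is upper triangular for any linear order refining `d`.
  let : LinearOrder {v // v ≠ v₀} :=
    LinearOrder.lift' (fun i => toLex (d i, Fintype.equivFin V i)) fun i j hij =>
      Subtype.val_injective ((Fintype.equivFin V).injective (Prod.ext_iff.mp hij).2)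
  have htriangular :
      (of fun i j : {v // v ≠ v₀} => signedIncidence F s(p j, j) i).IsUpperTriangular := by
    intro i j hji
    refine signedIncidence_apply_of_notMem fun hmem => ?_
    rcases Sym2.mem_iff.mp hmem with h | h
    · have hij : i < j := Prod.Lex.left _ _ (by rw [h]; exact hp j)
      exact lt_asymm hji hij
    · exact hji.ne (Subtype.val_injective h).symm
  rw [det_of_isUpperTriangular htriangular, ← prod_pow]
  refine prod_eq_one fun i _ => signedIncidence_apply_sq_of_mem ?_ (Sym2.mem_mk_right _ _)
  rw [Sym2.mk_isDiag_iff]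
  exact fun h => (hp i).ne (congrArg d h)

theorem det_signedIncidence_sq_of_connected (r : {v // v ≠ v₀} → Sym2 V)
    (hconn : (fromEdgeSet (Set.range r)).Connected) :
    (of fun i j : {v // v ≠ v₀} => signedIncidence F (r j) i).det ^ 2 = 1 := by
  -- Sending each vertex to the edge towards a parent closer to `v₀` enumerates the columns.
  choose p hpadj hpdist using fun i : {v // v ≠ v₀} => hconn.exists_adj_dist_lt i.2
  choose τ hτ using fun i => ((fromEdgeSet_adj _).mp (hpadj i)).1
  have hτinj : Function.Injective τ := by
    intro i j hij
    have h := hτ i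
    rw [hij, hτ j] at h
    rcases Sym2.eq_iff.mp h with ⟨-, h⟩ | ⟨h₁, h₂⟩
    · exact Subtype.val_injective h.symm
    · have hi := hpdist i
      have hj := hpdist j
      rw [h₁] at hj
      rw [← h₂] at hi
      omega
  let π := Equiv.ofBijective τ (Finite.injective_iff_bijective.mp hτinj)
  have hperm : (of fun i j : {v // v ≠ v₀} => signedIncidence F (r j) i).submatrix id π =
      of fun i j : {v // v ≠ v₀} => signedIncidence F s(p j, j) i := by
    ext i j
    simp [π, hτ]
  rw [← det_signedIncidence_parent_sq p _ hpdist, ← hperm, det_permute', mul_pow, ← Int.cast_pow,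
    ← Units.val_pow_eq_pow_val, Int.units_sq, Units.val_one, Int.cast_one, one_mul]

theorem det_signedIncidence_eq_zero_of_not_connected (r : {v // v ≠ v₀} → Sym2 V)
    (hconn : ¬(fromEdgeSet (Set.range r)).Connected) :
    (of fun i j : {v // v ≠ v₀} => signedIncidence F (r j) i).det = 0 := by
  set H := fromEdgeSet (Set.range r)
  obtain ⟨w, hw⟩ : ∃ w, ¬H.Reachable v₀ w := by
    by_contra! h
    exact hconn (connected_iff_exists_forall_reachable H |>.mpr ⟨v₀, h⟩)
  have hwv₀ : w ≠ v₀ := by rintro rfl; exact hw (Reachable.refl _)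
  let f : V → F := fun v => if H.Reachable w v then 1 else 0
  refine exists_vecMul_eq_zero_iff.mp ⟨fun i => f i, fun h => ?_, ?_⟩
  · simpa [f] using congrFun h ⟨w, hwv₀⟩
  · ext j
    simp only [vecMul, dotProduct, of_apply, Pi.zero_apply]
    rw [sum_subtype_ne_mul_signedIncidence (f := f) (if_neg fun h => hw h.symm), sub_eq_zero]
    by_cases hab : (r j).out.1 = (r j).out.2
    · rw [hab]
    have hadj : H.Adj (r j).out.1 (r j).out.2 :=
      (fromEdgeSet_adj _).mpr ⟨⟨j, (Quot.out_eq _).symm⟩, hab⟩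
    have hiff : H.Reachable w (r j).out.1 ↔ H.Reachable w (r j).out.2 :=
      ⟨fun h => h.trans hadj.reachable, fun h => h.trans hadj.symm.reachable⟩
    simp only [f, hiff]

end Determinants

section Graph

variable {F : Type} [Field F] [Fintype V] [DecidableEq V] (G : SimpleGraph V) [Fintype G.edgeSet]

variable (F) in
noncomputable def reducedIncidence (v₀ : V) : Matrix {v // v ≠ v₀} G.edgeSet F :=
  of fun v e => signedIncidence F (e : Sym2 V) v

omit [Fintype G.edgeSet] in
open scoped Classical in
theorem det_reducedIncidence_submatrix_sq {v₀ : V} (S : Finset G.edgeSet)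
    (σ : {v // v ≠ v₀} ≃ S) :
    ((reducedIncidence F G v₀).submatrix id fun i => (σ i : G.edgeSet)).det ^ 2 =
      if G.IsSpanningTree S then 1 else 0 := by
  set r : {v // v ≠ v₀} → Sym2 V := fun j => ((σ j : G.edgeSet) : Sym2 V)
  have hrange : Set.range r = Subtype.val '' (S : Set G.edgeSet) := by
    ext x
    simp only [Set.mem_range, Set.mem_image, mem_coe, r]
    exact ⟨fun ⟨j, hj⟩ => ⟨σ j, (σ j).2, hj⟩,
      fun ⟨e, he, hx⟩ => ⟨σ.symm ⟨e, he⟩, by simpa using hx⟩⟩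
  change (of fun i j : {v // v ≠ v₀} => signedIncidence F (r j) i).det ^ 2 = _
  split_ifs with hT
  · exact det_signedIncidence_sq_of_connected r (hrange ▸ hT.2)
  · have hS : S.card = Fintype.card V - 1 := by
      rw [← Fintype.card_coe S, ← Fintype.card_congr σ]
      simp
    rw [det_signedIncidence_eq_zero_of_not_connected r fun h => hT ⟨hS, hrange ▸ h⟩,
      zero_pow two_ne_zero]

theorem det_reducedIncidence_mul_diagonal_mul_transpose (v₀ : V) (γ : G.edgeSet → F) :
    (reducedIncidence F G v₀ * diagonal γ * (reducedIncidence F G v₀)ᵀ).det =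
      eval γ (dualPoly F G) := by
  classical
  set N := reducedIncidence F G v₀
  have hcard : Fintype.card {v // v ≠ v₀} = Fintype.card V - 1 := by simp
  rw [Matrix.mul_assoc, det_mul_eq_sum_powersetCard _ _
    (fun S => if G.IsSpanningTree S then ∏ e ∈ S, γ e else 0) fun S σ => ?_]
  · simp only [dualPoly, map_sum, map_prod, eval_X, ← sum_filter, hcard]
    congr 1
    ext T
    simp only [mem_filter, mem_powersetCard, mem_univ, subset_univ, true_and]
    exact ⟨And.right, fun hT => ⟨hT.1, hT⟩⟩
  have hB : ((diagonal γ * Nᵀ).submatrix (fun i => (σ i : G.edgeSet)) id) =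
      diagonal (fun i => γ (σ i)) * (N.submatrix id fun i => (σ i : G.edgeSet))ᵀ := by
    ext i j
    simp [diagonal_mul]
  have hprod : ∏ i, γ (σ i) = ∏ e ∈ S, γ e :=
    (Equiv.prod_comp σ fun e : S => γ e).trans (prod_coe_sort S γ)
  rw [hB, det_mul, det_diagonal, det_transpose, hprod, mul_left_comm, ← sq,
    det_reducedIncidence_submatrix_sq, mul_ite, mul_one, mul_zero]

end Graph

theorem eval_update_dualPoly {F : Type} [Field F] [Fintype V] (G : SimpleGraph V)
    [Fintype G.edgeSet] [DecidableEq G.edgeSet] (k : G.edgeSet) (α : G.edgeSet → F) (t : F) :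
    eval (Function.update α k t) (dualPoly F G) =
      t * eval α (pderiv k (dualPoly F G)) + eval α (setZero k (dualPoly F G)) := by
  simp only [dualPoly, setZero, map_sum, mul_sum, ← sum_add_distrib]
  exact sum_congr rfl fun T _ => eval_update_prod_X k T α t

/-- For a finite connected simple graph `G` with `h_G ≥ 2` (i.e.
`|E| ≥ |V| + 1`), an edge `e₁` and any finite field `F_q`, `q` divides the number of points
`β ∈ F_q^{E∖{e₁}}` with `(∂φ_G/∂x_{e₁})(β) = 0` and `(φ_G|_{x_{e₁}=0})(β) = 0`.
(Since neither polynomial involves `x_{e₁}`, these points are encoded as points of `F_q^E`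
whose `e₁`-coordinate is `0`.) -/
theorem deriv_and_deletion_point_count_div_q [Fintype V] (G : SimpleGraph V)
    [Fintype G.edgeSet] (hG : G.Connected)
    (hloop : Fintype.card V + 1 ≤ Fintype.card G.edgeSet) (e₁ : G.edgeSet)
    (F : Type) [Field F] [Fintype F] :
    Fintype.card F ∣ Nat.card {α : G.edgeSet → F //
      α e₁ = 0 ∧ eval α (pderiv e₁ (dualPoly F G)) = 0 ∧
        eval α (setZero e₁ (dualPoly F G)) = 0} := by
  classical
  obtain ⟨v₀⟩ := hG.nonempty
  have hcard : Fintype.card {v // v ≠ v₀} + 1 < Fintype.card G.edgeSet := by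
    have hV := Fintype.card_pos_iff.mpr ⟨v₀⟩
    simp only [ne_eq, Fintype.card_subtype_compl, Fintype.card_unique]
    omega
  rw [Nat.card_eq_fintype_card, Fintype.card_subtype]
  convert card_dvd_card_filter_det_eq_zero (reducedIncidence F G v₀) e₁ hcard using 2
  ext α
  simp only [mem_filter, mem_univ, true_and, det_reducedIncidence_mul_diagonal_mul_transpose]
  refine and_congr_right fun hα => ?_
  have hdel := eval_update_dualPoly G e₁ α 0
  rw [Function.update_eq_self_iff.mpr hα.symm, zero_mul, zero_add] at hdel
  rw [eval_update_dualPoly, one_mul, hdel]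
  exact ⟨fun ⟨hd, hz⟩ => ⟨hz, by rw [hd, hz, add_zero]⟩,
    fun ⟨hz, hsum⟩ => ⟨by rwa [hz, add_zero] at hsum, hz⟩⟩
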